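/- Let K be a field and V, W vector spaces over K. The K-algebra homomorphism φ : TensorAlgebra K (V ⊗ W) → (TensorAlgebra K V) ⊗[K] (TensorAlgebra K W) determined by φ(ι(v ⊗ w)) = (ι v) ⊗ (ι w) is injective, and its range equals the subalgebra of (TensorAlgebra K V) ⊗[K] (TensorAlgebra K W) generated by the elements (ι v) ⊗ (ι w) for v ∈ V, w ∈ W. -/

import Mathlib

/-!
Choose bases `(vᵢ)` of `V` and `(wⱼ)` of `W`. Then `T(V ⊗ W)` has the basis of words in the
letters `vᵢ ⊗ wⱼ`, and `TV ⊗ TW` the basis of tensors of a word in the `vᵢ` with a word in the `wⱼ`.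
The map `φ` sends `(vᵢ₁ ⊗ wⱼ₁) ⋯ (vᵢₖ ⊗ wⱼₖ)` to `(vᵢ₁ ⋯ vᵢₖ) ⊗ (wⱼ₁ ⋯ wⱼₖ)`, and a word of pairs
is recovered from its two unzipped words, so `φ` maps a basis injectively into a basis.
The range of an algebra map out of a tensor algebra is generated by the image of the degree-one
part, which here is spanned by the elements `ι v ⊗ ι w`.
-/

open TensorProduct

/-- The algebra homomorphism `T(V ⊗ W) → TV ⊗ TW` determined by `ι (v ⊗ w) ↦ ι v ⊗ ι w`. -/
noncomputable def tensorAlgebraTensorToTensorProduct (K V W : Type*) [Field K]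
    [AddCommGroup V] [Module K V] [AddCommGroup W] [Module K W] :
    TensorAlgebra K (V ⊗[K] W) →ₐ[K] TensorAlgebra K V ⊗[K] TensorAlgebra K W :=
  TensorAlgebra.lift K (TensorProduct.map (TensorAlgebra.ι K) (TensorAlgebra.ι K))

namespace FreeMonoid

variable {α β : Type*}

def unzip : FreeMonoid (α × β) →* FreeMonoid α × FreeMonoid β :=
  (map Prod.fst).prod (map Prod.snd)

theorem unzip_injective : Function.Injective (unzip : FreeMonoid (α × β) → _) := by
  intro l l' h
  apply toList.injective
  rw [← List.zip_unzip l.toList, ← List.zip_unzip l'.toList, List.unzip_eq_map,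
    List.unzip_eq_map, ← toList_map, ← toList_map, ← toList_map, ← toList_map]
  simp only [unzip, MonoidHom.prod_apply, Prod.ext_iff] at h
  rw [h.1, h.2]

end FreeMonoid

theorem FreeAlgebra.basisFreeMonoid_apply (R X : Type*) [CommSemiring R] (l : FreeMonoid X) :
    basisFreeMonoid R X l = FreeMonoid.lift (ι R) l := by
  rw [basisFreeMonoid, Module.Basis.map_apply]
  exact (MonoidAlgebra.lift_single _ _ _).trans (one_smul R _)

theorem Module.Basis.tensorAlgebra_apply {κ R M : Type*} [CommSemiring R] [AddCommMonoid M]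
    [Module R M] (b : Basis κ R M) (l : FreeMonoid κ) :
    b.tensorAlgebra l = FreeMonoid.lift (fun i => TensorAlgebra.ι R (b i)) l := by
  rw [tensorAlgebra, map_apply, FreeAlgebra.basisFreeMonoid_apply]
  induction l using FreeMonoid.inductionOn' <;> simp_all

section

variable {K V W : Type*} [Field K] [AddCommGroup V] [Module K V] [AddCommGroup W] [Module K W]

@[simp]
theorem tensorAlgebraTensorToTensorProduct_ι_tmul (v : V) (w : W) :
    tensorAlgebraTensorToTensorProduct K V W (TensorAlgebra.ι K (v ⊗ₜ w))
      = TensorAlgebra.ι K v ⊗ₜ TensorAlgebra.ι K w := by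
  simp [tensorAlgebraTensorToTensorProduct]

theorem tensorAlgebraTensorToTensorProduct_basis {I J : Type*} (bV : Module.Basis I K V)
    (bW : Module.Basis J K W) (l : FreeMonoid (I × J)) :
    tensorAlgebraTensorToTensorProduct K V W ((bV.tensorProduct bW).tensorAlgebra l)
      = (bV.tensorAlgebra.tensorProduct bW.tensorAlgebra) (FreeMonoid.unzip l) := by
  induction l using FreeMonoid.inductionOn' with
  | one => simp [Module.Basis.tensorAlgebra_apply, Module.Basis.tensorProduct_apply',
      Algebra.TensorProduct.one_def]
  | of_mul p l ih =>
    simp_all [Module.Basis.tensorAlgebra_apply, FreeMonoid.unzip,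
      Module.Basis.tensorProduct_apply', ← Algebra.TensorProduct.tmul_mul_tmul]

theorem tensorAlgebraTensorToTensorProduct_injective :
    Function.Injective (tensorAlgebraTensorToTensorProduct K V W) := by
  let bV := Module.Basis.ofVectorSpace K V
  let bW := Module.Basis.ofVectorSpace K W
  let b := (bV.tensorProduct bW).tensorAlgebra
  have hφb : tensorAlgebraTensorToTensorProduct K V W ∘ b
      = (bV.tensorAlgebra.tensorProduct bW.tensorAlgebra) ∘ FreeMonoid.unzip :=
    funext (tensorAlgebraTensorToTensorProduct_basis bV bW)
  refine LinearMap.injective_of_linearIndependent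
    (f := (tensorAlgebraTensorToTensorProduct K V W).toLinearMap) b.span_eq ?_
  exact hφb ▸ (Module.Basis.linearIndependent _).comp _ FreeMonoid.unzip_injective

theorem range_tensorAlgebraTensorToTensorProduct :
    (tensorAlgebraTensorToTensorProduct K V W).range
      = Algebra.adjoin K
          {x | ∃ (v : V) (w : W), x = TensorAlgebra.ι K v ⊗ₜ[K] TensorAlgebra.ι K w} := by
  rw [tensorAlgebraTensorToTensorProduct, TensorAlgebra.range_lift, ← LinearMap.coe_range,
    range_map_eq_span_tmul, Algebra.adjoin_span]
  simp_rw [eq_comm]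

end

/-- `φ : T(V ⊗ W) → TV ⊗ TW`, `ι(v ⊗ w) ↦ ι v ⊗ ι w`, is injective and its
range is the subalgebra generated by the elements `ι v ⊗ ι w`. -/
theorem tensorAlgebraTensorToTensorProduct_injective_range (K V W : Type*) [Field K]
    [AddCommGroup V] [Module K V] [AddCommGroup W] [Module K W] :
    Function.Injective (tensorAlgebraTensorToTensorProduct K V W)
      ∧ (tensorAlgebraTensorToTensorProduct K V W).range
        = Algebra.adjoin K
            {x : TensorAlgebra K V ⊗[K] TensorAlgebra K W | ∃ (v : V) (w : W),
              x = TensorAlgebra.ι K v ⊗ₜ[K] TensorAlgebra.ι K w} :=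
  ⟨tensorAlgebraTensorToTensorProduct_injective, range_tensorAlgebraTensorToTensorProduct⟩
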